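/- Let G = (V,E) be a finite simple graph, ≺ a linear order on V, and S ⊆ V. Then the internal inequality ∑_{u∈S} ∑_{v∈S, v≺u, uv∉E} x_{(v,u)} ≤ |S| − χ(G[S]) is valid for COL≺(G), i.e., it is satisfied by every point of COL≺(G) (equivalently, by the representative vector of every proper coloring of G). -/

import Mathlib

open scoped Classical

/-- `(u, v)` is an arc of `G` w.r.t. the order `lt`: `u ≺ v` and `uv ∉ E`. -/
abbrev IsArcPair {V : Type*} (G : SimpleGraph V) (lt : V → V → Prop) (p : V × V) : Prop :=
  lt p.1 p.2 ∧ ¬ G.Adj p.1 p.2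

/-- The set of arcs of `G` (ordered non-edges), as a type. -/
abbrev Arc {V : Type*} (G : SimpleGraph V) (lt : V → V → Prop) : Type _ :=
  {p : V × V // IsArcPair G lt p}

/-- A proper coloring of a graph, as a color function. -/
def ProperColoring {W : Type*} (H : SimpleGraph W) (c : W → ℕ) : Prop :=
  ∀ u v, H.Adj u v → c u ≠ c v

/-- `u` is the `lt`-least element of its color class under `c`. -/
def IsClassRep {V : Type*} (lt : V → V → Prop) (c : V → ℕ) (u : V) : Prop :=
  ∀ w, c w = c u → u = w ∨ lt u w

/-- The representative vector of a coloring `c`: `x (u,v) = 1` iff `u` and `v` have the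
same color and `u` is the `lt`-least element of that color class. -/
noncomputable def repVec {V : Type*} (G : SimpleGraph V) (lt : V → V → Prop) (c : V → ℕ) :
    Arc G lt → ℝ := fun a =>
  if c a.1.1 = c a.1.2 ∧ IsClassRep lt c a.1.1 then 1 else 0

/-- The coloring polytope: convex hull of representative vectors of proper colorings. -/
noncomputable def COL {V : Type*} (G : SimpleGraph V) (lt : V → V → Prop) :
    Set (Arc G lt → ℝ) :=
  convexHull ℝ {x | ∃ c : V → ℕ, ProperColoring G c ∧ x = repVec G lt c}

/-- A stable (independent) set of a graph. -/
def IsStableSet {W : Type*} (H : SimpleGraph W) (s : Set W) : Prop :=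
  ∀ a ∈ s, ∀ b ∈ s, ¬ H.Adj a b

/-- The stable set polytope of a graph. -/
noncomputable def STAB {W : Type*} (H : SimpleGraph W) : Set (W → ℝ) :=
  convexHull ℝ {x | ∃ s : Set W, IsStableSet H s ∧ x = s.indicator 1}

/-- The Cornaz–Jost graph `R≺(G)`: vertices are the arcs of `G`; two distinct arcs
`(a,b)` and `(c,d)` are adjacent iff they share an endpoint and it is not the case that
`a = c` and `bd ∉ E`. -/
def RGraph {V : Type*} (G : SimpleGraph V) (lt : V → V → Prop) : SimpleGraph (Arc G lt) where
  Adj p q := p ≠ q ∧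
    (p.1.1 = q.1.1 ∨ p.1.1 = q.1.2 ∨ p.1.2 = q.1.1 ∨ p.1.2 = q.1.2) ∧
    ¬ (p.1.1 = q.1.1 ∧ ¬ G.Adj p.1.2 q.1.2)
  symm := by
    refine ⟨?_⟩
    rintro p q ⟨h1, h2, h3⟩
    refine ⟨h1.symm, ?_, fun hc => h3 ⟨hc.1.symm, fun h => hc.2 (G.adj_symm h)⟩⟩
    rcases h2 with h | h | h | h
    · exact Or.inl h.symm
    · exact Or.inr (Or.inr (Or.inl h.symm))
    · exact Or.inr (Or.inl h.symm)
    · exact Or.inr (Or.inr (Or.inr h.symm))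
  loopless := ⟨fun p h => h.1 rfl⟩

/-- The line graph of the complement of `G`, with the edges of the complement
identified with the arcs of `G`: two distinct arcs are adjacent iff they share an endpoint. -/
def lineGraphArc {V : Type*} (G : SimpleGraph V) (lt : V → V → Prop) :
    SimpleGraph (Arc G lt) where
  Adj p q := p ≠ q ∧
    (p.1.1 = q.1.1 ∨ p.1.1 = q.1.2 ∨ p.1.2 = q.1.1 ∨ p.1.2 = q.1.2)
  symm := by
    refine ⟨?_⟩
    rintro p q ⟨h1, h2⟩
    refine ⟨h1.symm, ?_⟩
    rcases h2 with h | h | h | h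
    · exact Or.inl h.symm
    · exact Or.inr (Or.inr (Or.inl h.symm))
    · exact Or.inr (Or.inl h.symm)
    · exact Or.inr (Or.inr (Or.inr h.symm))
  loopless := ⟨fun p h => h.1 rfl⟩

/-- The independence number of `H` is at most 2. -/
def AlphaLeTwo {W : Type*} (H : SimpleGraph W) : Prop :=
  ∀ s : Set W, IsStableSet H s → s.ncard ≤ 2

/-- The chromatic number of a graph, as a natural number. -/
noncomputable def chromNum {W : Type*} (H : SimpleGraph W) : ℕ :=
  sInf {n : ℕ | ∃ c : W → ℕ, ProperColoring H c ∧ ∀ v, c v < n}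

/-- `H` contains a copy of `F` as a (not necessarily induced) subgraph. -/
def ContainsCopy {α β : Type*} (F : SimpleGraph α) (H : SimpleGraph β) : Prop :=
  ∃ f : α → β, Function.Injective f ∧ ∀ a b, F.Adj a b → H.Adj (f a) (f b)

/-- `H` contains an induced copy of `F`. -/
def ContainsInducedCopy {α β : Type*} (F : SimpleGraph α) (H : SimpleGraph β) : Prop :=
  ∃ f : α → β, Function.Injective f ∧ ∀ a b, H.Adj (f a) (f b) ↔ F.Adj a b

/-- The paw: a triangle `{0,1,2}` plus the vertex `3` adjacent only to `2`. -/
def pawGraph : SimpleGraph (Fin 4) :=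
  SimpleGraph.fromEdgeSet {s(0, 1), s(0, 2), s(1, 2), s(2, 3)}

/-- The kite: the paw plus the vertex `4` adjacent only to `3` (the paw's degree-1 vertex). -/
def kiteGraph : SimpleGraph (Fin 5) :=
  SimpleGraph.fromEdgeSet {s(0, 1), s(0, 2), s(1, 2), s(2, 3), s(3, 4)}

/-- The claw `K_{1,3}`: vertex `0` adjacent to `1`, `2`, `3`. -/
def clawGraph : SimpleGraph (Fin 4) :=
  SimpleGraph.fromEdgeSet {s(0, 1), s(0, 2), s(0, 3)}

/-- A graph is claw-free if it has no induced copy of `K_{1,3}`. -/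
def ClawFree {W : Type*} (H : SimpleGraph W) : Prop :=
  ¬ ContainsInducedCopy clawGraph H

/-- A graph is quasi-line if the neighborhood of every vertex can be partitioned
into two cliques. -/
def QuasiLine {W : Type*} (H : SimpleGraph W) : Prop :=
  ∀ v : W, ∃ K₁ K₂ : Set W, Disjoint K₁ K₂ ∧ K₁ ∪ K₂ = {w | H.Adj v w} ∧
    H.IsClique K₁ ∧ H.IsClique K₂

/-- A graph is hypomatchable if deleting any vertex leaves a graph with a perfect matching. -/
def Hypomatchable {W : Type*} (H : SimpleGraph W) : Prop :=
  ∀ u : W, ∃ M : (H.induce {v | v ≠ u}).Subgraph, M.IsPerfectMatching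

/-- A graph is 2-connected: connected, at least 3 vertices, and deleting any vertex
leaves it connected. -/
def TwoConnected {W : Type*} [Fintype W] (H : SimpleGraph W) : Prop :=
  H.Connected ∧ 3 ≤ Fintype.card W ∧ ∀ u : W, (H.induce {v | v ≠ u}).Connected

/-- A set of arcs is a matching of the complement of `G`: no two distinct arcs share
an endpoint. -/
def IsMatchingArcSet {V : Type*} (G : SimpleGraph V) (lt : V → V → Prop)
    (m : Set (Arc G lt)) : Prop :=
  ∀ p ∈ m, ∀ q ∈ m, p ≠ q →
    ¬ (p.1.1 = q.1.1 ∨ p.1.1 = q.1.2 ∨ p.1.2 = q.1.1 ∨ p.1.2 = q.1.2)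

/-- The matching polytope of the complement of `G`, viewed in `ℝ^A` via the
identification of edges of the complement with arcs. -/
noncomputable def MATCHarcs {V : Type*} (G : SimpleGraph V) (lt : V → V → Prop) :
    Set (Arc G lt → ℝ) :=
  convexHull ℝ {x | ∃ m : Set (Arc G lt), IsMatchingArcSet G lt m ∧ x = m.indicator 1}

/-- Restriction of a vector indexed by arcs of `G` to the arcs of an induced subgraph. -/
def restrictVec {V : Type*} (G : SimpleGraph V) (lt : V → V → Prop) (W : Set V)
    (x : Arc G lt → ℝ) : Arc (G.induce W) (fun a b => lt ↑a ↑b) → ℝ :=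
  fun a => x ⟨(↑a.1.1, ↑a.1.2), a.2.1, a.2.2⟩

/-!
Since the left-hand side is linear in `x`, it suffices to check the inequality at the
representative vector of a proper coloring `c`. For `u ∈ S`, the terms `x (v, u)` with `v ∈ S`
sum to at most `1`, because only the `≺`-least vertex of the colour class of `u` can
contribute; and they sum to `0` when `u` is `≺`-minimal among the vertices of `S` of its
colour. Every colour used on `S` has such a minimal vertex, so the left-hand side is at most
`|S| - |c(S)| ≤ |S| - χ(G[S])`.
-/

section InternalInequality

variable {V : Type*} (G : SimpleGraph V) (lt : V → V → Prop)

lemma chromNum_le_card_of_properColoring {W : Type*} (H : SimpleGraph W) {c : W → ℕ}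
    (hc : ProperColoring H c) (T : Finset ℕ) (hT : ∀ w, c w ∈ T) : chromNum H ≤ T.card :=
  Nat.sInf_le ⟨fun w => T.equivFin ⟨c w, hT w⟩,
    fun u v huv heq => hc u v huv (by simpa using T.equivFin.injective (Fin.ext heq)),
    fun w => (T.equivFin ⟨c w, hT w⟩).isLt⟩

def IsMinimalInColorClass {β : Type*} (c : V → β) (S : Finset V) (u : V) : Prop :=
  ∀ v ∈ S, c v = c u → ¬ lt v u

lemma card_image_le_card_minimalInColorClass [IsStrictOrder V lt] {β : Type*} [DecidableEq β]
    (c : V → β) (S : Finset V) :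
    (S.image c).card ≤ (S.filter (IsMinimalInColorClass lt c S)).card := by
  refine (Finset.card_le_card ?_).trans (Finset.card_image_le (f := c))
  intro i hi
  obtain ⟨u, hu, rfl⟩ := Finset.mem_image.1 hi
  have hwf : (↑(S.filter (c · = c u)) : Set V).WellFoundedOn lt := Finset.wellFoundedOn _
  obtain ⟨⟨m, hm⟩, -, hmin⟩ := WellFounded.has_min hwf Set.univ ⟨⟨u, by simp [hu]⟩, trivial⟩
  obtain ⟨hmS, hmc⟩ := Finset.mem_filter.1 hm
  refine Finset.mem_image.2 ⟨m, Finset.mem_filter.2 ⟨hmS, fun v hv hvc hvm => ?_⟩, hmc⟩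
  exact hmin ⟨v, Finset.mem_filter.2 ⟨hv, hvc.trans hmc⟩⟩ trivial hvm

lemma IsClassRep.eq_of_color_eq [Std.Asymm lt] {c : V → ℕ} {a b : V} (ha : IsClassRep lt c a)
    (hb : IsClassRep lt c b) (hab : c a = c b) : a = b := by
  rcases ha b hab.symm with h | hlt
  · exact h
  · exact ((hb a hab).resolve_right (asymm hlt)).symm

lemma sum_repVec_arcs_into_le [DecidableRel G.Adj] [DecidableRel lt] [IsStrictOrder V lt]
    (c : V → ℕ) (S : Finset V) (u : V) :
    (∑ v ∈ S, if h : IsArcPair G lt (v, u) then repVec G lt c ⟨(v, u), h⟩ else 0) ≤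
      if IsMinimalInColorClass lt c S u then 0 else 1 := by
  have hcard : (∑ v ∈ S, if h : IsArcPair G lt (v, u) then repVec G lt c ⟨(v, u), h⟩ else 0) =
      (S.filter fun v => IsArcPair G lt (v, u) ∧ c v = c u ∧ IsClassRep lt c v).card := by
    rw [Finset.natCast_card_filter]
    refine Finset.sum_congr rfl fun v _ => ?_
    simp only [repVec]
    split_ifs <;> tauto
  rw [hcard]
  split_ifs with hmin
  · refine le_of_eq (Nat.cast_eq_zero.2 (Finset.card_eq_zero.2 (Finset.filter_eq_empty_iff.2 ?_)))
    rintro v hv ⟨harc, hvu, -⟩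
    exact hmin v hv hvu harc.1
  · refine Nat.cast_le_one.2 (Finset.card_le_one.2 fun a ha b hb => ?_)
    obtain ⟨-, hau, ha⟩ := (Finset.mem_filter.1 ha).2
    obtain ⟨-, hbu, hb⟩ := (Finset.mem_filter.1 hb).2
    exact ha.eq_of_color_eq lt hb (hau.trans hbu.symm)

def internalSum [DecidableRel G.Adj] [DecidableRel lt] (S : Finset V) (x : Arc G lt → ℝ) : ℝ :=
  ∑ u ∈ S, ∑ v ∈ S, if h : IsArcPair G lt (v, u) then x ⟨(v, u), h⟩ else 0

lemma isLinearMap_internalSum [DecidableRel G.Adj] [DecidableRel lt] (S : Finset V) :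
    IsLinearMap ℝ (internalSum G lt S) where
  map_add y z := by
    simp only [internalSum, ← Finset.sum_add_distrib]
    congr! with u _ v _
    split_ifs <;> simp
  map_smul a y := by
    simp only [internalSum, Finset.smul_sum]
    congr! with u _ v _
    split_ifs <;> simp

lemma internalSum_repVec_le [DecidableRel G.Adj] [DecidableRel lt] [IsStrictOrder V lt]
    {c : V → ℕ} (hc : ProperColoring G c) (S : Finset V) :
    internalSum G lt S (repVec G lt c) ≤ S.card - chromNum (G.induce (↑S : Set V)) := by
  have hsplit := Finset.card_filter_add_card_filter_not (IsMinimalInColorClass lt c S) (s := S)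
  calc internalSum G lt S (repVec G lt c)
      ≤ ∑ u ∈ S, if IsMinimalInColorClass lt c S u then (0 : ℝ) else 1 :=
        Finset.sum_le_sum fun u _ => sum_repVec_arcs_into_le G lt c S u
    _ = S.card - (S.filter (IsMinimalInColorClass lt c S)).card := by
        rw [Finset.sum_ite, Finset.sum_const_zero, Finset.sum_const, nsmul_one, ← hsplit]
        push_cast
        ring
    _ ≤ S.card - (S.image c).card := by
        gcongr
        exact card_image_le_card_minimalInColorClass lt c S
    _ ≤ S.card - chromNum (G.induce (↑S : Set V)) := by
        gcongr
        exact chromNum_le_card_of_properColoring (G.induce (↑S : Set V))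
          (fun u v huv => hc u v huv) _ fun w => Finset.mem_image_of_mem c w.2

end InternalInequality

theorem statement8_general {V : Type*}
    (G : SimpleGraph V) [DecidableRel G.Adj]
    (lt : V → V → Prop) [DecidableRel lt] (hlt : IsStrictTotalOrder V lt)
    (S : Finset V) (x : Arc G lt → ℝ) (hx : x ∈ COL G lt) :
    (∑ u ∈ S, ∑ v ∈ S, if h : IsArcPair G lt (v, u) then x ⟨(v, u), h⟩ else 0) ≤
      (S.card : ℝ) - chromNum (G.induce (↑S : Set V)) := by
  have := hlt
  suffices COL G lt ⊆ {y | internalSum G lt S y ≤ S.card - chromNum (G.induce (↑S : Set V))} from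
    this hx
  refine convexHull_min ?_ (convex_halfSpace_le (isLinearMap_internalSum G lt S) _)
  rintro _ ⟨c, hc, rfl⟩
  exact internalSum_repVec_le G lt hc S

/-- the internal inequality
`∑_{u∈S} ∑_{v∈S, v≺u, uv∉E} x_{(v,u)} ≤ |S| − χ(G[S])` is valid for `COL≺(G)`. -/
theorem statement8 {V : Type*} [Fintype V] [DecidableEq V]
    (G : SimpleGraph V) [DecidableRel G.Adj]
    (lt : V → V → Prop) [DecidableRel lt] (hlt : IsStrictTotalOrder V lt)
    (S : Finset V) (x : Arc G lt → ℝ) (hx : x ∈ COL G lt) :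
    (∑ u ∈ S, ∑ v ∈ S, if h : IsArcPair G lt (v, u) then x ⟨(v, u), h⟩ else 0) ≤
      (S.card : ℝ) - chromNum (G.induce (↑S : Set V)) :=
  statement8_general G lt hlt S x hx
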